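/- arXiv:2503.17277 — 2 statements merged into one kernel-verified Lean document; each statement's English description precedes it below -/
import Mathlib

section
/- Let f ∈ C²[0,1] with f' ≥ a > 0 (or f' ≤ -a < 0) and |f''| ≤ b on [0,1], where a > 0. Then |∫₀¹ e^{2πi f(x)} dx| < a⁻¹ + a⁻² b. -/
open Real MeasureTheory intervalIntegral

private lemma le_on_Icc_of_le_on_Ioo {h : ℝ → ℝ} {r : ℝ}
    (hc : ContinuousOn h (Set.Icc 0 1))
    (hle : ∀ x ∈ Set.Ioo (0:ℝ) 1, h x ≤ r) :
    ∀ x ∈ Set.Icc (0:ℝ) 1, h x ≤ r := by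
  intro x hx
  have hcl : x ∈ closure (Set.Ioo (0:ℝ) 1) := by
    rwa [closure_Ioo (by norm_num : (0:ℝ) ≠ 1)]
  have hnb : (nhdsWithin x (Set.Ioo (0:ℝ) 1)).NeBot :=
    mem_closure_iff_nhdsWithin_neBot.mp hcl
  have ht : Filter.Tendsto h (nhdsWithin x (Set.Ioo (0:ℝ) 1)) (nhds (h x)) :=
    (hc x hx).mono Set.Ioo_subset_Icc_self
  exact le_of_tendsto ht (eventually_nhdsWithin_of_forall hle)

/-- Kaufman's non-stationary phase (van der Corput) estimate:
if `f ∈ C²[0,1]` with `f' ≥ a > 0` (or `f' ≤ -a`) and `|f''| ≤ b` on `[0,1]`,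
then `|∫₀¹ e^{2πi f(x)} dx| < a⁻¹ + a⁻² b`. -/
theorem nonstationary_phase_estimate
    (f : ℝ → ℝ) (a b : ℝ) (ha : 0 < a)
    (hf : ContDiffOn ℝ 2 f (Set.Icc 0 1))
    (hderiv : (∀ x ∈ Set.Icc (0:ℝ) 1, a ≤ deriv f x) ∨
              (∀ x ∈ Set.Icc (0:ℝ) 1, deriv f x ≤ -a))
    (hsecond : ∀ x ∈ Set.Icc (0:ℝ) 1, |deriv (deriv f) x| ≤ b) :
    ‖∫ x in (0:ℝ)..1, Complex.exp (2 * Real.pi * Complex.I * (f x))‖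
      < a⁻¹ + a⁻¹ ^ 2 * b := by
  have hS : UniqueDiffOn ℝ (Set.Icc (0:ℝ) 1) := uniqueDiffOn_Icc (by norm_num)
  set g : ℝ → ℝ := derivWithin f (Set.Icc 0 1) with hg_def
  set g₂ : ℝ → ℝ := derivWithin g (Set.Icc 0 1) with hg2_def
  set c : ℂ := 2 * Real.pi * Complex.I with hc_def
  -- basic facts
  have hb0 : 0 ≤ b := le_trans (abs_nonneg _) (hsecond 0 (by norm_num))
  have hπ : (0:ℝ) < Real.pi := Real.pi_pos
  have hg1 : ContDiffOn ℝ 1 g (Set.Icc 0 1) := hf.derivWithin hS (by norm_num)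
  have hgcont : ContinuousOn g (Set.Icc 0 1) := hg1.continuousOn
  have hg2cont : ContinuousOn g₂ (Set.Icc 0 1) :=
    hg1.continuousOn_derivWithin hS (le_refl 1)
  -- on the interior, g = deriv f and g₂ = deriv (deriv f)
  have hmem : ∀ x ∈ Set.Ioo (0:ℝ) 1, Set.Icc (0:ℝ) 1 ∈ nhds x := fun x hx =>
    Icc_mem_nhds hx.1 hx.2
  have hg_eq : ∀ x ∈ Set.Ioo (0:ℝ) 1, g x = deriv f x := fun x hx =>
    derivWithin_of_mem_nhds (hmem x hx)
  have hg2_eq : ∀ x ∈ Set.Ioo (0:ℝ) 1, g₂ x = deriv (deriv f) x := by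
    intro x hx
    have h1 : g₂ x = deriv g x := derivWithin_of_mem_nhds (hmem x hx)
    have h2 : g =ᶠ[nhds x] deriv f := by
      filter_upwards [Ioo_mem_nhds hx.1 hx.2] with y hy using hg_eq y hy
    rw [h1, h2.deriv_eq]
  -- |g| ≥ a on Icc
  have hga : ∀ x ∈ Set.Icc (0:ℝ) 1, a ≤ |g x| := by
    have key : ∀ x ∈ Set.Icc (0:ℝ) 1, -|g x| ≤ -a := by
      apply le_on_Icc_of_le_on_Ioo (hgcont.abs.neg)
      intro y hy
      have hgy := hg_eq y hy
      have hgoal : a ≤ |g y| := by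
        rcases hderiv with h | h
        · have := h y (Set.Ioo_subset_Icc_self hy)
          rw [hgy]; exact le_trans this (le_abs_self _)
        · have := h y (Set.Ioo_subset_Icc_self hy)
          rw [hgy]
          calc a ≤ -(deriv f y) := by linarith
            _ ≤ |deriv f y| := neg_le_abs _
      show -|g y| ≤ -a; linarith
    intro x hx
    have := key x hx
    linarith
  have hgne : ∀ x ∈ Set.Icc (0:ℝ) 1, g x ≠ 0 := by
    intro x hx h0
    have := hga x hx
    rw [h0, abs_zero] at this; linarith
  -- |g₂| ≤ b on Icc
  have hg2b : ∀ x ∈ Set.Icc (0:ℝ) 1, |g₂ x| ≤ b := by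
    apply le_on_Icc_of_le_on_Ioo (hg2cont.abs)
    intro y hy
    rw [hg2_eq y hy]
    exact hsecond y (Set.Ioo_subset_Icc_self hy)
  -- c ≠ 0 and c * g x ≠ 0
  have hcne : c ≠ 0 := by
    simp [hc_def, Complex.ext_iff, Real.pi_ne_zero]
  have hcg_ne : ∀ x ∈ Set.Icc (0:ℝ) 1, c * (g x : ℂ) ≠ 0 := by
    intro x hx
    exact mul_ne_zero hcne (by exact_mod_cast hgne x hx)
  -- the functions
  set φ : ℝ → ℂ := fun x => Complex.exp (c * f x) with hφ_def
  set u : ℝ → ℂ := fun x => φ x * (c * (g x : ℂ))⁻¹ with hu_def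
  set w : ℝ → ℂ := fun x => φ x * (-(c * (g₂ x : ℂ)) / (c * (g x : ℂ)) ^ 2) with hw_def
  -- derivative of u on the interior
  have hu_deriv : ∀ x ∈ Set.Ioo (0:ℝ) 1, HasDerivAt u (φ x + w x) x := by
    intro x hx
    have hxI : x ∈ Set.Icc (0:ℝ) 1 := Set.Ioo_subset_Icc_self hx
    have hfx : HasDerivAt f (g x) x := by
      have hd : DifferentiableAt ℝ f x :=
        (hf.differentiableOn (by norm_num)).differentiableAt (hmem x hx)
      have := hd.hasDerivAt
      rwa [← hg_eq x hx] at this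
    have hgx : HasDerivAt g (g₂ x) x := by
      have hd : DifferentiableAt ℝ g x :=
        (hg1.differentiableOn (by norm_num)).differentiableAt (hmem x hx)
      have h1 : g₂ x = deriv g x := derivWithin_of_mem_nhds (hmem x hx)
      rw [h1]; exact hd.hasDerivAt
    have hφx : HasDerivAt φ (Complex.exp (c * f x) * (c * g x)) x :=
      ((hfx.ofReal_comp).const_mul c).cexp
    have hvx : HasDerivAt (fun y => (c * (g y : ℂ))⁻¹)
        (-(((c * (g x : ℂ)) ^ 2)⁻¹) * (c * (g₂ x : ℂ))) x := by
      have hinner : HasDerivAt (fun y => c * (g y : ℂ)) (c * (g₂ x : ℂ)) x :=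
        (hgx.ofReal_comp).const_mul c
      have houter : HasDerivAt (fun z : ℂ => z⁻¹) (-(((c * (g x : ℂ)) ^ 2)⁻¹))
          (c * (g x : ℂ)) := hasDerivAt_inv (hcg_ne x hxI)
      exact houter.comp x hinner
    have := hφx.mul hvx
    refine HasDerivAt.congr_deriv this ?_
    have hne := hcg_ne x hxI
    have hgx0 : (g x : ℂ) ≠ 0 := by exact_mod_cast hgne x hxI
    rw [hw_def, hφ_def]
    field_simp
    try ring
  -- continuity of u on Icc
  have hφcont : ContinuousOn φ (Set.Icc 0 1) := by
    apply Complex.continuous_exp.comp_continuousOn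
    exact continuousOn_const.mul (Complex.continuous_ofReal.comp_continuousOn hf.continuousOn)
  have hucont : ContinuousOn u (Set.Icc 0 1) := by
    apply hφcont.mul
    apply ContinuousOn.inv₀
    · exact continuousOn_const.mul (Complex.continuous_ofReal.comp_continuousOn hgcont)
    · exact hcg_ne
  have hwcont : ContinuousOn w (Set.Icc 0 1) := by
    apply hφcont.mul
    apply ContinuousOn.div
    · exact (continuousOn_const.mul
        (Complex.continuous_ofReal.comp_continuousOn hg2cont)).neg
    · exact (continuousOn_const.mul
        (Complex.continuous_ofReal.comp_continuousOn hgcont)).pow 2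
    · intro x hx
      exact pow_ne_zero 2 (hcg_ne x hx)
  -- integrabilities
  have hInt_φ : IntervalIntegrable φ volume 0 1 :=
    hφcont.intervalIntegrable_of_Icc (by norm_num)
  have hInt_w : IntervalIntegrable w volume 0 1 :=
    hwcont.intervalIntegrable_of_Icc (by norm_num)
  -- fundamental theorem of calculus
  have hFTC : ∫ x in (0:ℝ)..1, (φ x + w x) = u 1 - u 0 :=
    integral_eq_sub_of_hasDerivAt_of_le (by norm_num) hucont hu_deriv
      (hInt_φ.add hInt_w)
  have hsplit : ∫ x in (0:ℝ)..1, φ x = (u 1 - u 0) - ∫ x in (0:ℝ)..1, w x := by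
    rw [← hFTC, integral_add hInt_φ hInt_w]
    try ring
  -- norm computations
  have hφnorm : ∀ x : ℝ, ‖φ x‖ = 1 := by
    intro x
    simp [hφ_def, hc_def, Complex.norm_exp, Complex.mul_re, Complex.mul_im]
  have hcnorm : ‖c‖ = 2 * Real.pi := by
    rw [hc_def]
    rw [norm_mul, norm_mul, Complex.norm_I, Complex.norm_real, Real.norm_eq_abs,
      abs_of_pos hπ]
    norm_num
  have hcmul : ∀ t : ℝ, ‖c * (t:ℂ)‖ = 2 * Real.pi * |t| := by
    intro t
    rw [norm_mul, hcnorm, Complex.norm_real, Real.norm_eq_abs]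
  have hunorm : ∀ x ∈ Set.Icc (0:ℝ) 1, ‖u x‖ ≤ (2 * Real.pi * a)⁻¹ := by
    intro x hx
    have h1 : ‖u x‖ = (2 * Real.pi * |g x|)⁻¹ := by
      simp only [hu_def]
      rw [norm_mul, hφnorm, one_mul, norm_inv, hcmul]
    rw [h1]
    apply inv_anti₀ (by positivity)
    have := hga x hx
    nlinarith
  have hwnorm : ∀ x ∈ Set.Icc (0:ℝ) 1, ‖w x‖ ≤ b / (2 * Real.pi * a ^ 2) := by
    intro x hx
    have h1 : ‖w x‖ = (2 * Real.pi * |g₂ x|) / (2 * Real.pi * |g x|) ^ 2 := by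
      simp only [hw_def]
      rw [norm_mul, hφnorm, one_mul, norm_div, norm_neg, norm_pow, hcmul, hcmul]
    rw [h1]
    have h2 := hga x hx
    have h3 := hg2b x hx
    have h24 : 2 * Real.pi * a ≤ 2 * Real.pi * |g x| :=
      mul_le_mul_of_nonneg_left h2 (by positivity)
    have h4 : (0:ℝ) < 2 * Real.pi * |g x| :=
      lt_of_lt_of_le (by positivity) h24
    have h5 : (2 * Real.pi * a) ^ 2 ≤ (2 * Real.pi * |g x|) ^ 2 :=
      pow_le_pow_left₀ (by positivity) h24 2
    rw [div_le_div_iff₀ (by positivity) (by positivity)]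
    nlinarith [abs_nonneg (g₂ x), mul_nonneg hb0 (sq_nonneg (2 * Real.pi * a))]
  -- estimate the integral
  have hInt_w_bound : ‖∫ x in (0:ℝ)..1, w x‖ ≤ b / (2 * Real.pi * a ^ 2) := by
    have := intervalIntegral.norm_integral_le_of_norm_le_const
      (a := 0) (b := 1) (C := b / (2 * Real.pi * a ^ 2)) (f := w)
      (fun x hx => hwnorm x (by
        rw [Set.uIoc_of_le (by norm_num : (0:ℝ) ≤ 1)] at hx
        exact Set.mem_Icc.2 ⟨le_of_lt hx.1, hx.2⟩))
    simpa using this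
  have hmain : ‖∫ x in (0:ℝ)..1, φ x‖ ≤
      (2 * Real.pi * a)⁻¹ + (2 * Real.pi * a)⁻¹ + b / (2 * Real.pi * a ^ 2) := by
    rw [hsplit]
    calc ‖(u 1 - u 0) - ∫ x in (0:ℝ)..1, w x‖
        ≤ ‖u 1 - u 0‖ + ‖∫ x in (0:ℝ)..1, w x‖ := norm_sub_le _ _
      _ ≤ (‖u 1‖ + ‖u 0‖) + ‖∫ x in (0:ℝ)..1, w x‖ :=
          add_le_add_left (norm_sub_le _ _) _
      _ ≤ ((2 * Real.pi * a)⁻¹ + (2 * Real.pi * a)⁻¹) + b / (2 * Real.pi * a ^ 2) :=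
          add_le_add (add_le_add (hunorm 1 (by norm_num)) (hunorm 0 (by norm_num)))
            hInt_w_bound
      _ = _ := by ring
  -- final numeric estimate
  have hπ3 : (3:ℝ) < Real.pi := Real.pi_gt_three
  have hfinal : (2 * Real.pi * a)⁻¹ + (2 * Real.pi * a)⁻¹ + b / (2 * Real.pi * a ^ 2)
      < a⁻¹ + a⁻¹ ^ 2 * b := by
    rw [inv_pow]
    have h1 : (2 * Real.pi * a)⁻¹ + (2 * Real.pi * a)⁻¹ = (Real.pi * a)⁻¹ := by
      rw [← two_mul]; field_simp
    rw [h1]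
    have h2 : (Real.pi * a)⁻¹ < a⁻¹ := by
      apply inv_strictAnti₀ ha
      nlinarith
    have h3 : b / (2 * Real.pi * a ^ 2) ≤ (a ^ 2)⁻¹ * b := by
      rw [div_le_iff₀ (by positivity), inv_mul_eq_div, div_mul_eq_mul_div,
        le_div_iff₀ (by positivity)]
      nlinarith [mul_nonneg hb0 (sq_nonneg a)]
    linarith
  calc ‖∫ x in (0:ℝ)..1, Complex.exp (2 * Real.pi * Complex.I * (f x))‖
      = ‖∫ x in (0:ℝ)..1, φ x‖ := by rw [hφ_def]
    _ ≤ _ := hmain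
    _ < _ := hfinal
end

section
/- Let ν be a probability measure on a countable set X such that every atom has measure at most 2^{−j} for some positive integer j. Then there exists a subset T ⊆ X with |ν(T) − 1/2| ≤ 2^{−j}. -/
open MeasureTheory

/-- If `ν` is a probability measure on a countable set all of whose atoms have
measure at most `2^{-j}`, then there is a subset `T` with
`|ν(T) - 1/2| ≤ 2^{-j}`. -/
theorem top_half_splitting (X : Type*) [Countable X] [MeasurableSpace X]
    [MeasurableSingletonClass X]
    (ν : Measure X) [IsProbabilityMeasure ν] (j : ℕ) (hj : 1 ≤ j)
    (hatom : ∀ x : X, ν {x} ≤ ENNReal.ofReal ((2 : ℝ) ^ (-(j : ℤ)))) :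
    ∃ T : Set X, |(ν T).toReal - 1 / 2| ≤ (2 : ℝ) ^ (-(j : ℤ)) := by
  obtain ⟨e, he⟩ := exists_injective_nat X
  set c : ℝ := (2 : ℝ) ^ (-(j : ℤ)) with hc
  have hcpos : (0 : ℝ) < c := by positivity
  set S : ℕ → Set X := fun n => {x | e x < n} with hS
  have hmeas : ∀ A : Set X, MeasurableSet A := fun A => (Set.to_countable A).measurableSet
  have hmono : Monotone S := fun m n hmn x hx => lt_of_lt_of_le hx hmn
  set g : ℕ → ℝ := fun n => (ν (S n)).toReal with hg
  have hstep : ∀ n, g (n + 1) ≤ g n + c := by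
    intro n
    have hsub : S n ⊆ S (n + 1) := hmono (Nat.le_succ n)
    have hν : ν (S (n + 1) \ S n) ≤ ENNReal.ofReal c := by
      rcases Set.eq_empty_or_nonempty (S (n + 1) \ S n) with h | ⟨x, hx⟩
      · simp [h]
      · have hx' : e x = n := by
          have h1 : e x < n + 1 := hx.1
          have h2 : ¬ e x < n := hx.2
          omega
        have hsub' : S (n + 1) \ S n ⊆ {x} := by
          intro y hy
          have hy' : e y = n := by
            have h1 : e y < n + 1 := hy.1
            have h2 : ¬ e y < n := hy.2
            omega
          exact he (by rw [hy', hx'])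
        calc ν (S (n + 1) \ S n) ≤ ν {x} := measure_mono hsub'
          _ ≤ _ := hatom x
    have hunion : S n ∪ (S (n + 1) \ S n) = S (n + 1) := Set.union_diff_cancel hsub
    have hmeq : ν (S (n + 1)) = ν (S n) + ν (S (n + 1) \ S n) := by
      rw [← hunion, measure_union disjoint_sdiff_self_right (hmeas _), hunion]
    have := ENNReal.toReal_mono (by simp [ENNReal.ofReal_ne_top]) hν
    rw [ENNReal.toReal_ofReal hcpos.le] at this
    have : g (n + 1) = g n + (ν (S (n + 1) \ S n)).toReal := by
      rw [hg]
      simp only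
      rw [hmeq, ENNReal.toReal_add (measure_ne_top _ _) (measure_ne_top _ _)]
    linarith [ENNReal.toReal_mono (by simp) hν, ENNReal.toReal_ofReal hcpos.le]
  have hexists : ∃ n, 1 / 2 ≤ g n := by
    have hU : ⋃ n, S n = Set.univ := by
      ext x
      simp only [Set.mem_iUnion, Set.mem_univ, iff_true]
      exact ⟨e x + 1, Nat.lt_succ_self _⟩
    have htend : Filter.Tendsto (fun n => ν (S n)) Filter.atTop (nhds (ν (⋃ n, S n))) :=
      tendsto_measure_iUnion_atTop hmono
    rw [hU, measure_univ] at htend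
    have : ∀ᶠ n in Filter.atTop, ν (S n) > 1 / 2 :=
      htend.eventually (eventually_gt_nhds (by norm_num))
    obtain ⟨n, hn⟩ := this.exists
    refine ⟨n, ?_⟩
    have := ENNReal.toReal_mono (measure_ne_top _ _) hn.le
    simpa using this
  classical
  set N := Nat.find hexists with hN
  have hNspec : 1 / 2 ≤ g N := Nat.find_spec hexists
  have hN0 : N ≠ 0 := by
    intro h
    have h0 : 1 / 2 ≤ g 0 := by rw [h] at hNspec; exact hNspec
    have hg0 : g 0 = 0 := by
      have : S 0 = ∅ := by ext x; simp [hS]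
      simp [hg, this]
    linarith
  obtain ⟨m, hm⟩ : ∃ m, N = m + 1 := ⟨N - 1, by omega⟩
  have hmlt : g m < 1 / 2 := by
    have := Nat.find_min hexists (m := m) (by omega)
    linarith [not_le.mp this]
  refine ⟨S N, ?_⟩
  have h1 : g N ≤ g m + c := hm ▸ hstep m
  rw [abs_le]
  constructor
  · linarith
  · linarith
end
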